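/- arXiv:2001.02353 — 2 statements merged into one kernel-verified Lean document; each statement's English description precedes it below -/
import Mathlib

section
/- The series Σ_{n=2}^∞ (2n−3)!! · 2^{n−1} · μ^n λ^{n−1} / (n! (μ+λ)^{2n−1}) converges and μ/(μ+λ) + Σ_{n=2}^∞ (2n−3)!! · 2^{n−1} · μ^n λ^{n−1} / (n! (μ+λ)^{2n−1}) = min(μ/λ, 1); in particular, when μ ≥ λ the left-hand side equals 1. -/
/-!
With `a = μ / (μ + λ)`, `b = λ / (μ + λ)` and `x = a b`, the identity
`(2n+1)!! 2^(n+1) = C(n+1) (n+2)!` turns the term of index `n + 2` into `C(n+1) x^(n+2) / b`, where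
`C` denotes the Catalan numbers. The Catalan generating function `G(x) = ∑ C(k) x^(k+1)` converges
on `[0, 1/4]`, since `2 C(k) = 4 binom(2k, k) - binom(2k+2, k+1)` makes its partial sums at
`x = 1/4` telescope to at most `1/2`. The Catalan recursion gives `G = x + G²`, so
`G(x) = (1 - √(1 - 4x)) / 2`, and since `1 - 4ab = (a - b)²` when `a + b = 1`, `G(ab) = min a b`.
The left-hand side is therefore `a + (min a b - ab) / b = min a b / b = min (μ / λ) 1`.
-/

open Finset
open scoped Nat

lemma two_mul_catalan_div_four_pow_eq_sub (k : ℕ) :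
    2 * (catalan k : ℝ) / 4 ^ (k + 1) =
      (Nat.centralBinom k : ℝ) / 4 ^ k - (Nat.centralBinom (k + 1) : ℝ) / 4 ^ (k + 1) := by
  have hsucc :
      ((k : ℝ) + 1) * Nat.centralBinom (k + 1) = 2 * (2 * k + 1) * Nat.centralBinom k := by
    exact_mod_cast Nat.succ_mul_centralBinom_succ k
  have hcat : ((k : ℝ) + 1) * catalan k = Nat.centralBinom k := by
    exact_mod_cast succ_mul_catalan_eq_centralBinom k
  have key : 4 * (Nat.centralBinom k : ℝ) - Nat.centralBinom (k + 1) = 2 * catalan k := by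
    apply mul_left_cancel₀ (show (k : ℝ) + 1 ≠ 0 by positivity)
    linear_combination -hsucc - 2 * hcat
  rw [pow_succ]
  field_simp
  linear_combination -key

lemma sum_range_catalan_mul_pow_succ_le {x : ℝ} (hx₀ : 0 ≤ x) (hx : x ≤ 1 / 4) (N : ℕ) :
    ∑ k ∈ range N, (catalan k : ℝ) * x ^ (k + 1) ≤ 1 / 2 := by
  have hterm (k : ℕ) : (catalan k : ℝ) * x ^ (k + 1) ≤
      ((Nat.centralBinom k : ℝ) / 4 ^ k - (Nat.centralBinom (k + 1) : ℝ) / 4 ^ (k + 1)) / 2 := by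
    rw [← two_mul_catalan_div_four_pow_eq_sub]
    calc (catalan k : ℝ) * x ^ (k + 1) ≤ catalan k * (1 / 4) ^ (k + 1) := by gcongr
      _ = 2 * (catalan k : ℝ) / 4 ^ (k + 1) / 2 := by rw [div_pow, one_pow]; ring
  calc ∑ k ∈ range N, (catalan k : ℝ) * x ^ (k + 1)
      ≤ ∑ k ∈ range N,
          ((Nat.centralBinom k : ℝ) / 4 ^ k - (Nat.centralBinom (k + 1) : ℝ) / 4 ^ (k + 1)) / 2 :=
        sum_le_sum fun k _ => hterm k
    _ = (1 - (Nat.centralBinom N : ℝ) / 4 ^ N) / 2 := by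
        rw [← sum_div, sum_range_sub' (fun k => (Nat.centralBinom k : ℝ) / 4 ^ k)]
        simp
    _ ≤ 1 / 2 := by
        have : (0 : ℝ) ≤ (Nat.centralBinom N : ℝ) / 4 ^ N := by positivity
        linarith

lemma summable_catalan_mul_pow_succ {x : ℝ} (hx₀ : 0 ≤ x) (hx : x ≤ 1 / 4) :
    Summable fun k : ℕ => (catalan k : ℝ) * x ^ (k + 1) :=
  summable_of_sum_range_le (fun _ => by positivity) (sum_range_catalan_mul_pow_succ_le hx₀ hx)

lemma tsum_catalan_mul_pow_succ_eq_add_sq {x : ℝ} (hx₀ : 0 ≤ x) (hx : x ≤ 1 / 4) :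
    ∑' k : ℕ, (catalan k : ℝ) * x ^ (k + 1) =
      x + (∑' k : ℕ, (catalan k : ℝ) * x ^ (k + 1)) ^ 2 := by
  have hs := summable_catalan_mul_pow_succ hx₀ hx
  have hnorm : Summable fun k : ℕ => ‖(catalan k : ℝ) * x ^ (k + 1)‖ := by
    simpa only [Real.norm_eq_abs] using hs.abs
  have hanti (n : ℕ) : ∑ kl ∈ antidiagonal n,
      (catalan kl.1 : ℝ) * x ^ (kl.1 + 1) * ((catalan kl.2 : ℝ) * x ^ (kl.2 + 1)) =
        (catalan (n + 1) : ℝ) * x ^ (n + 1 + 1) := by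
    rw [catalan_succ', Nat.cast_sum, sum_mul]
    refine sum_congr rfl fun kl hkl => ?_
    rw [← mem_antidiagonal.mp hkl]
    push_cast
    ring
  rw [sq, tsum_mul_tsum_eq_tsum_sum_antidiagonal_of_summable_norm hnorm hnorm,
    hs.tsum_eq_zero_add]
  simp only [hanti, catalan_zero, Nat.cast_one, one_mul, zero_add, pow_one]

lemma hasSum_catalan_mul_pow_succ {x : ℝ} (hx₀ : 0 ≤ x) (hx : x ≤ 1 / 4) :
    HasSum (fun k : ℕ => (catalan k : ℝ) * x ^ (k + 1)) ((1 - √(1 - 4 * x)) / 2) := by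
  convert (summable_catalan_mul_pow_succ hx₀ hx).hasSum using 1
  set C := ∑' k : ℕ, (catalan k : ℝ) * x ^ (k + 1)
  have hC : C ≤ 1 / 2 :=
    Real.tsum_le_of_sum_range_le (fun _ => by positivity) (sum_range_catalan_mul_pow_succ_le hx₀ hx)
  have hsq : 1 - 4 * x = (1 - 2 * C) ^ 2 := by
    linear_combination 4 * tsum_catalan_mul_pow_succ_eq_add_sq hx₀ hx
  rw [hsq, Real.sqrt_sq (by linarith)]
  ring

lemma hasSum_catalan_mul_mul_pow_succ_of_add_eq_one {a b : ℝ} (ha : 0 ≤ a) (hb : 0 ≤ b)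
    (hab : a + b = 1) :
    HasSum (fun k : ℕ => (catalan k : ℝ) * (a * b) ^ (k + 1)) (min a b) := by
  have hdisc : 1 - 4 * (a * b) = (a - b) ^ 2 := by linear_combination -(a + b + 1) * hab
  have hab₄ : a * b ≤ 1 / 4 := by nlinarith [sq_nonneg (a - b)]
  convert hasSum_catalan_mul_pow_succ (by positivity) hab₄ using 1
  rw [hdisc, Real.sqrt_sq_eq_abs]
  rcases le_total a b with h | h
  · rw [min_eq_left h, abs_of_nonpos (by linarith)]; linarith
  · rw [min_eq_right h, abs_of_nonneg (by linarith)]; linarith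

lemma doubleFactorial_mul_two_pow (n : ℕ) :
    (2 * n + 1)‼ * 2 ^ (n + 1) = catalan (n + 1) * (n + 2)! := by
  have heven : (2 * n + 1 + 1)‼ = 2 ^ (n + 1) * (n + 1)! := by
    rw [show 2 * n + 1 + 1 = 2 * (n + 1) by ring, Nat.doubleFactorial_two_mul]
  have hfact : (2 * n + 2)! = (n + 2) * catalan (n + 1) * (n + 1)! * (n + 1)! := by
    rw [succ_mul_catalan_eq_centralBinom, Nat.centralBinom_eq_two_mul_choose, two_mul (n + 1),
      Nat.add_choose_mul_factorial_mul_factorial]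
    ring_nf
  apply Nat.eq_of_mul_eq_mul_right (Nat.factorial_pos (n + 1))
  calc (2 * n + 1)‼ * 2 ^ (n + 1) * (n + 1)! = (2 * n + 1 + 1)‼ * (2 * n + 1)‼ := by
        rw [heven]; ring
    _ = (2 * n + 2)! := (Nat.factorial_eq_mul_doubleFactorial _).symm
    _ = catalan (n + 1) * (n + 2)! * (n + 1)! := by rw [hfact, Nat.factorial_succ (n + 1)]; ring

lemma doubleFactorial_series_term_eq_catalan (μ lam : ℝ) (hlam : lam ≠ 0) (hs : μ + lam ≠ 0)
    (n : ℕ) :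
    (Nat.doubleFactorial (2 * (n + 2) - 3) : ℝ) * 2 ^ (n + 2 - 1) * μ ^ (n + 2) *
        lam ^ (n + 2 - 1) / ((Nat.factorial (n + 2) : ℝ) * (μ + lam) ^ (2 * (n + 2) - 1)) =
      catalan (n + 1) * (μ / (μ + lam) * (lam / (μ + lam))) ^ (n + 1 + 1) /
        (lam / (μ + lam)) := by
  have hdf : ((2 * n + 1)‼ : ℝ) * 2 ^ (n + 1) = catalan (n + 1) * (n + 2)! := by
    exact_mod_cast doubleFactorial_mul_two_pow n
  rw [show 2 * (n + 2) - 3 = 2 * n + 1 by omega, show n + 2 - 1 = n + 1 by omega,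
    show 2 * (n + 2) - 1 = 2 * n + 3 by omega, hdf]
  simp only [div_mul_div_comm, div_pow, ← pow_two, ← pow_mul]
  field_simp
  ring

theorem stmt_15 (μ lam : ℝ) (hμ : 0 < μ) (hlam : 0 < lam) :
    Summable (fun n : ℕ =>
      (Nat.doubleFactorial (2 * (n + 2) - 3) : ℝ) * 2 ^ (n + 2 - 1) * μ ^ (n + 2) *
        lam ^ (n + 2 - 1) / ((Nat.factorial (n + 2) : ℝ) * (μ + lam) ^ (2 * (n + 2) - 1))) ∧
    μ / (μ + lam) +
      (∑' n : ℕ,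
        (Nat.doubleFactorial (2 * (n + 2) - 3) : ℝ) * 2 ^ (n + 2 - 1) * μ ^ (n + 2) *
          lam ^ (n + 2 - 1) / ((Nat.factorial (n + 2) : ℝ) * (μ + lam) ^ (2 * (n + 2) - 1))) =
      min (μ / lam) 1 ∧
    (lam ≤ μ →
      μ / (μ + lam) +
        (∑' n : ℕ,
          (Nat.doubleFactorial (2 * (n + 2) - 3) : ℝ) * 2 ^ (n + 2 - 1) * μ ^ (n + 2) *
            lam ^ (n + 2 - 1) / ((Nat.factorial (n + 2) : ℝ) * (μ + lam) ^ (2 * (n + 2) - 1))) =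
        1) := by
  have hs : 0 < μ + lam := by positivity
  set a := μ / (μ + lam)
  set b := lam / (μ + lam)
  have hb : 0 < b := by positivity
  have hab : a + b = 1 := by rw [← add_div, div_self hs.ne']
  have hsum : HasSum (fun n : ℕ =>
      (Nat.doubleFactorial (2 * (n + 2) - 3) : ℝ) * 2 ^ (n + 2 - 1) * μ ^ (n + 2) *
        lam ^ (n + 2 - 1) / ((Nat.factorial (n + 2) : ℝ) * (μ + lam) ^ (2 * (n + 2) - 1)))
      ((min a b - a * b) / b) := by
    have h := ((hasSum_nat_add_iff' 1).mpr
      (hasSum_catalan_mul_mul_pow_succ_of_add_eq_one (by positivity) hb.le hab)).div_const b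
    simp only [sum_range_one, catalan_zero, Nat.cast_one, one_mul, zero_add, pow_one] at h
    rwa [funext (doubleFactorial_series_term_eq_catalan μ lam hlam.ne' hs.ne')]
  have hval : a + (min a b - a * b) / b = min (μ / lam) 1 := by
    rw [← div_self hb.ne', ← div_div_div_cancel_right₀ hs.ne' μ lam, min_div_div_right hb.le]
    field_simp
    ring
  refine ⟨hsum.summable, by rw [hsum.tsum_eq, hval], fun h => ?_⟩
  rw [hsum.tsum_eq, hval, min_eq_right ((one_le_div hlam).mpr h)]
end

section
/- For every v ∈ [0,1] the set {u ∈ [0,1] : 2qv − 3pu + u³ = 0} is nonempty; let ρ(v) denote its minimum. Then there exist nonnegative real numbers (ρ_k)_{k≥1} such that for every v ∈ [0,1) one has ρ(v) = Σ_{k=1}^∞ ρ_k v^k, and these coefficients satisfy ρ_1 = 2q/(3p), ρ_2 = 0, and for every n ≥ 2, ρ_{n+1} = (1/(p(n+1))) · Σ_{k=2}^{n} (n−k+1) ρ_{n−k+1} (Σ_{i=1}^{k−1} ρ_i ρ_{k−i}). -/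
/-!
Write the cubic as the fixed-point equation `u = a v + b u³` with `a = 2q/(3p)`, `b = 1/(3p)`,
and run the Picard iteration `P₀ = 0`, `Pₖ₊₁ = a X + b Pₖ³` on polynomials. Since `X` divides
every `Pₖ`, `Pₖ₊₁ - Pₖ` is divisible by `X^(k+1)`, so the coefficients stabilise to a power series
`F = a X + b F³`; differentiating gives `F' = a + 3b F² F'`, whose coefficients are the stated
recursion. For `a, b, v ≥ 0` the coefficients of the `Pₖ` are nonnegative and increase with `k`, so
`Pₖ(v)` lies between the partial sums of `F(v)` and its sum; by induction `Pₖ(v)` stays below every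
nonnegative `u` with `a v + b u³ ≤ u`, in particular below every root in `[0, 1]` and below `1`.
Hence `F(v)` converges, is a root in `[0, 1]`, and is the least one.
-/

open Finset (Icc range mem_Icc mem_range sum_subset)
open Filter Topology

section

open PowerSeries

variable {R : Type*} [CommRing R]

lemma PowerSeries.coeff_mk_sq {f : ℕ → R} (hf : f 0 = 0) (k : ℕ) :
    coeff k (mk f ^ 2) = ∑ i ∈ Icc 1 (k - 1), f i * f (k - i) := by
  rw [sq, coeff_mul, Finset.Nat.sum_antidiagonal_eq_sum_range_succ_mk]
  simp only [coeff_mk]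
  symm
  refine sum_subset (fun i hi => by simp at hi ⊢; omega) fun i hi hi' => ?_
  simp only [mem_range, mem_Icc, not_and_or] at hi hi'
  obtain rfl | rfl : i = 0 ∨ i = k := by omega
  all_goals simp [hf]

lemma succ_mul_coeff_succ_of_mk_eq_cubic {a b : R} {f : ℕ → R} (hf : f 0 = 0)
    (h : mk f = C a * X + C b * mk f ^ 3) {n : ℕ} (hn : 1 ≤ n) :
    f (n + 1) * (n + 1) = 3 * b * ∑ k ∈ Icc 2 n,
      ((n - k + 1 : ℕ) : R) * f (n - k + 1) * ∑ i ∈ Icc 1 (k - 1), f i * f (k - i) := by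
  have hD : d⁄dX R (mk f) = C a + C (3 * b) * (mk f ^ 2 * d⁄dX R (mk f)) := by
    conv_lhs => rw [h]
    simp only [map_add, Derivation.leibniz, Derivation.leibniz_pow, derivative_X, derivative_C,
      smul_eq_mul, nsmul_eq_mul, mul_one, mul_zero, add_zero, Nat.add_one_sub_one, Nat.cast_ofNat,
      map_mul, map_ofNat, add_right_inj]
    ring
  have hn' := congrArg (coeff n) hD
  rw [coeff_derivative, coeff_mk, map_add, coeff_C, if_neg (by omega), zero_add, coeff_C_mul,
    coeff_mul, Finset.Nat.sum_antidiagonal_eq_sum_range_succ_mk] at hn'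
  simp only [coeff_mk_sq hf, coeff_derivative, coeff_mk] at hn'
  rw [hn', ← sum_subset (s₁ := Icc 2 n) (fun k hk => by simp at hk ⊢; omega)]
  · refine congrArg _ (Finset.sum_congr rfl fun k hk => ?_)
    push_cast [(mem_Icc.mp hk).2]
    ring
  · intro k hkn hk
    rw [Finset.Icc_eq_empty (by simp at hkn hk; omega), Finset.sum_empty, zero_mul]

end

noncomputable section

open Polynomial

section

variable {R : Type*} [CommRing R] (a b : R)

def cubicIterate : ℕ → R[X]
  | 0 => 0
  | k + 1 => C a * X + C b * cubicIterate k ^ 3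

def cubicCoeff (n : ℕ) : R := (cubicIterate a b n).coeff n

@[simp] lemma cubicIterate_zero : cubicIterate a b 0 = 0 := rfl

lemma cubicIterate_succ (k : ℕ) :
    cubicIterate a b (k + 1) = C a * X + C b * cubicIterate a b k ^ 3 := rfl

lemma cubicIterate_succ_succ_sub (k : ℕ) :
    cubicIterate a b (k + 2) - cubicIterate a b (k + 1) =
      C b * ((cubicIterate a b (k + 1) - cubicIterate a b k) *
        (cubicIterate a b (k + 1) ^ 2 + cubicIterate a b (k + 1) * cubicIterate a b k +
          cubicIterate a b k ^ 2)) := by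
  rw [cubicIterate_succ a b (k + 1), cubicIterate_succ a b k]
  ring

lemma eval_cubicIterate_succ (v : R) (k : ℕ) :
    (cubicIterate a b (k + 1)).eval v = a * v + b * (cubicIterate a b k).eval v ^ 3 := by
  simp [cubicIterate_succ]

lemma X_dvd_cubicIterate (k : ℕ) : X ∣ cubicIterate a b k := by
  induction k with
  | zero => simp
  | succ k ih =>
    exact dvd_add (dvd_mul_left _ _) (dvd_mul_of_dvd_right (dvd_pow ih three_ne_zero) _)

lemma X_pow_dvd_cubicIterate_succ_sub (k : ℕ) :
    X ^ (k + 1) ∣ cubicIterate a b (k + 1) - cubicIterate a b k := by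
  induction k with
  | zero => simp [cubicIterate_succ]
  | succ k ih =>
    have hX := X_dvd_cubicIterate a b
    rw [cubicIterate_succ_succ_sub, pow_succ]
    exact dvd_mul_of_dvd_right (mul_dvd_mul ih (dvd_add (dvd_add (dvd_pow (hX _) two_ne_zero)
      (dvd_mul_of_dvd_left (hX _) _)) (dvd_pow (hX _) two_ne_zero))) _

lemma coeff_cubicIterate_of_le {n k : ℕ} (h : n ≤ k) :
    (cubicIterate a b k).coeff n = cubicCoeff a b n := by
  induction k, h using Nat.le_induction with
  | base => rfl
  | succ k hnk ih =>
    rw [← ih, ← sub_eq_zero, ← coeff_sub]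
    exact X_pow_dvd_iff.mp (X_pow_dvd_cubicIterate_succ_sub a b k) n (by omega)

@[simp] lemma cubicCoeff_zero : cubicCoeff a b 0 = 0 := by simp [cubicCoeff]

@[simp] lemma cubicCoeff_one : cubicCoeff a b 1 = a := by
  simp [cubicCoeff, cubicIterate_succ]

@[simp] lemma cubicCoeff_two : cubicCoeff a b 2 = 0 := by
  simp [cubicCoeff, cubicIterate_succ, mul_pow, ← C_pow, -map_pow]

lemma mk_cubicCoeff :
    PowerSeries.mk (cubicCoeff a b) =
      PowerSeries.C a * PowerSeries.X + PowerSeries.C b * PowerSeries.mk (cubicCoeff a b) ^ 3 := by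
  ext n
  have hdvd : PowerSeries.X ^ (n + 1) ∣
      PowerSeries.mk (cubicCoeff a b) ^ 3 - (cubicIterate a b n : PowerSeries R) ^ 3 := by
    refine dvd_trans ?_ (sub_dvd_pow_sub_pow _ _ 3)
    refine PowerSeries.X_pow_dvd_iff.mpr fun m hm => ?_
    rw [map_sub, Polynomial.coeff_coe, PowerSeries.coeff_mk,
      coeff_cubicIterate_of_le a b (by omega), sub_self]
  have hcube := PowerSeries.X_pow_dvd_iff.mp hdvd n n.lt_succ_self
  rw [map_sub, sub_eq_zero] at hcube
  rw [PowerSeries.coeff_mk, ← coeff_cubicIterate_of_le a b n.le_succ, cubicIterate_succ]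
  simp [hcube, ← Polynomial.coeff_coe, PowerSeries.coeff_X]

end

lemma Polynomial.coeff_mul_nonneg {S : Type*} [Semiring S] [PartialOrder S] [IsOrderedRing S]
    {P Q : S[X]} (hP : ∀ n, 0 ≤ P.coeff n) (hQ : ∀ n, 0 ≤ Q.coeff n) (n : ℕ) :
    0 ≤ (P * Q).coeff n := by
  rw [coeff_mul]
  exact Finset.sum_nonneg fun x _ => mul_nonneg (hP _) (hQ _)

section

variable {a b : ℝ} (ha : 0 ≤ a) (hb : 0 ≤ b)

include ha hb

lemma coeff_cubicIterate_nonneg (k n : ℕ) : 0 ≤ (cubicIterate a b k).coeff n := by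
  induction k generalizing n with
  | zero => simp
  | succ k ih =>
    have hcube : ∀ n, 0 ≤ (cubicIterate a b k ^ 3).coeff n := by
      simp only [pow_succ, pow_zero, one_mul]
      exact coeff_mul_nonneg (coeff_mul_nonneg ih ih) ih
    rw [cubicIterate_succ, coeff_add, coeff_C_mul_X, coeff_C_mul]
    exact add_nonneg (by split_ifs <;> simp [ha]) (mul_nonneg hb (hcube n))

lemma coeff_cubicIterate_le_succ (k n : ℕ) :
    (cubicIterate a b k).coeff n ≤ (cubicIterate a b (k + 1)).coeff n := by
  rw [← sub_nonneg, ← coeff_sub]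
  induction k generalizing n with
  | zero => simpa using coeff_cubicIterate_nonneg ha hb 1 n
  | succ k ih =>
    have h := coeff_cubicIterate_nonneg ha hb
    rw [cubicIterate_succ_succ_sub, coeff_C_mul]
    refine mul_nonneg hb (coeff_mul_nonneg ih (fun m => ?_) n)
    simp only [coeff_add, sq]
    exact add_nonneg (add_nonneg (coeff_mul_nonneg (h _) (h _) m) (coeff_mul_nonneg (h _) (h _) m))
      (coeff_mul_nonneg (h _) (h _) m)

lemma coeff_cubicIterate_le_cubicCoeff (k n : ℕ) :
    (cubicIterate a b k).coeff n ≤ cubicCoeff a b n := by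
  rw [← coeff_cubicIterate_of_le a b (le_max_right k n)]
  exact monotone_nat_of_le_succ (fun k => coeff_cubicIterate_le_succ ha hb k n) (le_max_left k n)

lemma cubicCoeff_nonneg (n : ℕ) : 0 ≤ cubicCoeff a b n :=
  coeff_cubicIterate_nonneg ha hb n n

variable {v : ℝ} (hv : 0 ≤ v)

include hv

lemma eval_cubicIterate_le {u : ℝ} (hu : 0 ≤ u) (hsup : a * v + b * u ^ 3 ≤ u) (k : ℕ) :
    (cubicIterate a b k).eval v ≤ u := by
  induction k with
  | zero => simpa using hu
  | succ k ih =>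
    have h0 : 0 ≤ (cubicIterate a b k).eval v := by
      rw [eval_eq_sum]
      exact Finset.sum_nonneg fun i _ =>
        mul_nonneg (coeff_cubicIterate_nonneg ha hb k i) (pow_nonneg hv i)
    rw [eval_cubicIterate_succ]
    nlinarith [pow_le_pow_left₀ h0 ih 3]

lemma sum_range_cubicCoeff_mul_pow_le_eval (N : ℕ) :
    ∑ n ∈ range N, cubicCoeff a b n * v ^ n ≤ (cubicIterate a b N).eval v := by
  set M := max N ((cubicIterate a b N).natDegree + 1)
  rw [eval_eq_sum_range' (lt_of_lt_of_le (Nat.lt_succ_self _) (le_max_right _ _))]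
  calc ∑ n ∈ range N, cubicCoeff a b n * v ^ n
      = ∑ n ∈ range N, (cubicIterate a b N).coeff n * v ^ n :=
        Finset.sum_congr rfl fun n hn => by
          rw [coeff_cubicIterate_of_le a b (mem_range.mp hn).le]
    _ ≤ ∑ n ∈ range M, (cubicIterate a b N).coeff n * v ^ n :=
        Finset.sum_le_sum_of_subset_of_nonneg (Finset.range_subset_range.mpr (le_max_left _ _))
          fun n _ _ => mul_nonneg (coeff_cubicIterate_nonneg ha hb N n) (pow_nonneg hv n)

lemma eval_cubicIterate_le_tsum (hs : Summable fun n => cubicCoeff a b n * v ^ n) (k : ℕ) :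
    (cubicIterate a b k).eval v ≤ ∑' n, cubicCoeff a b n * v ^ n := by
  rw [eval_eq_sum_range]
  refine le_trans (Finset.sum_le_sum fun n _ => ?_)
    (hs.sum_le_tsum _ fun n _ => mul_nonneg (cubicCoeff_nonneg ha hb n) (pow_nonneg hv n))
  exact mul_le_mul_of_nonneg_right (coeff_cubicIterate_le_cubicCoeff ha hb k n) (pow_nonneg hv n)

lemma summable_cubicCoeff_mul_pow {u : ℝ} (hu : 0 ≤ u) (hsup : a * v + b * u ^ 3 ≤ u) :
    Summable fun n => cubicCoeff a b n * v ^ n :=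
  summable_of_sum_range_le (fun n => mul_nonneg (cubicCoeff_nonneg ha hb n) (pow_nonneg hv n))
    fun N => (sum_range_cubicCoeff_mul_pow_le_eval ha hb hv N).trans
      (eval_cubicIterate_le ha hb hv hu hsup N)

lemma tsum_cubicCoeff_mul_pow_le {u : ℝ} (hu : 0 ≤ u) (hsup : a * v + b * u ^ 3 ≤ u) :
    ∑' n, cubicCoeff a b n * v ^ n ≤ u :=
  Real.tsum_le_of_sum_range_le (fun n => mul_nonneg (cubicCoeff_nonneg ha hb n) (pow_nonneg hv n))
    fun N => (sum_range_cubicCoeff_mul_pow_le_eval ha hb hv N).trans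
      (eval_cubicIterate_le ha hb hv hu hsup N)

lemma tsum_cubicCoeff_mul_pow_eq (hs : Summable fun n => cubicCoeff a b n * v ^ n) :
    ∑' n, cubicCoeff a b n * v ^ n = a * v + b * (∑' n, cubicCoeff a b n * v ^ n) ^ 3 := by
  have hlim : Tendsto (fun k => (cubicIterate a b k).eval v) atTop
      (𝓝 (∑' n, cubicCoeff a b n * v ^ n)) :=
    tendsto_of_tendsto_of_tendsto_of_le_of_le hs.hasSum.tendsto_sum_nat tendsto_const_nhds
      (sum_range_cubicCoeff_mul_pow_le_eval ha hb hv) (eval_cubicIterate_le_tsum ha hb hv hs)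
  refine tendsto_nhds_unique ((tendsto_add_atTop_iff_nat 1).mpr hlim) ?_
  simp_rw [eval_cubicIterate_succ]
  exact ((hlim.pow 3).const_mul b).const_add _

lemma isLeast_tsum_cubicCoeff_mul_pow (hsup : a * v + b * 1 ^ 3 ≤ 1) :
    IsLeast {u ∈ Set.Icc (0 : ℝ) 1 | u = a * v + b * u ^ 3} (∑' n, cubicCoeff a b n * v ^ n) := by
  refine ⟨⟨⟨tsum_nonneg fun n => mul_nonneg (cubicCoeff_nonneg ha hb n) (pow_nonneg hv n),
    tsum_cubicCoeff_mul_pow_le ha hb hv zero_le_one hsup⟩, tsum_cubicCoeff_mul_pow_eq ha hb hv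
      (summable_cubicCoeff_mul_pow ha hb hv zero_le_one hsup)⟩, ?_⟩
  rintro u ⟨⟨hu, -⟩, hfix⟩
  exact tsum_cubicCoeff_mul_pow_le ha hb hv hu hfix.symm.le

end

end

theorem stmt_16 (p q : ℝ) (hp : 0 < p) (hq : 0 < q) (hpq : 3 * p = 2 * q + 1) :
    (∀ v ∈ Set.Icc (0:ℝ) 1,
      {u ∈ Set.Icc (0:ℝ) 1 | 2 * q * v - 3 * p * u + u ^ 3 = 0}.Nonempty) ∧
    ∃ r : ℕ → ℝ,
      (∀ k, 1 ≤ k → 0 ≤ r k) ∧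
      (∀ v ∈ Set.Ico (0:ℝ) 1, ∀ ρv : ℝ,
        IsLeast {u ∈ Set.Icc (0:ℝ) 1 | 2 * q * v - 3 * p * u + u ^ 3 = 0} ρv →
        HasSum (fun k : ℕ => r (k + 1) * v ^ (k + 1)) ρv) ∧
      r 1 = 2 * q / (3 * p) ∧ r 2 = 0 ∧
      ∀ n : ℕ, 2 ≤ n →
        r (n + 1) = (1 / (p * (n + 1))) *
          ∑ k ∈ Finset.Icc 2 n,
            ((n - k + 1 : ℕ) : ℝ) * r (n - k + 1) *
              ∑ i ∈ Finset.Icc 1 (k - 1), r i * r (k - i) := by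
  set a := 2 * q / (3 * p) with ha_def
  set b := 1 / (3 * p) with hb_def
  have ha : 0 ≤ a := by positivity
  have hb : 0 ≤ b := by positivity
  have hsup : ∀ v ≤ 1, a * v + b * 1 ^ 3 ≤ 1 := fun v hv => by
    rw [ha_def, hb_def]
    field_simp
    nlinarith
  have hroots : ∀ v, {u ∈ Set.Icc (0:ℝ) 1 | 2 * q * v - 3 * p * u + u ^ 3 = 0} =
      {u ∈ Set.Icc (0:ℝ) 1 | u = a * v + b * u ^ 3} := fun v => by
    ext u
    refine and_congr_right fun _ => ?_
    rw [eq_comm (a := u), ← sub_eq_zero, ha_def, hb_def]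
    field_simp
    constructor <;> intro h <;> linarith
  have hleast : ∀ v ∈ Set.Icc (0:ℝ) 1, IsLeast
      {u ∈ Set.Icc (0:ℝ) 1 | 2 * q * v - 3 * p * u + u ^ 3 = 0} (∑' n, cubicCoeff a b n * v ^ n) :=
    fun v hv => hroots v ▸ isLeast_tsum_cubicCoeff_mul_pow ha hb hv.1 (hsup v hv.2)
  refine ⟨fun v hv => (hleast v hv).nonempty, cubicCoeff a b, fun k _ => cubicCoeff_nonneg ha hb k,
    fun v hv ρv hρv => ?_, cubicCoeff_one a b, cubicCoeff_two a b, fun n hn => ?_⟩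
  · rw [← (hleast v (Set.Ico_subset_Icc_self hv)).unique hρv]
    have hs := summable_cubicCoeff_mul_pow ha hb hv.1 zero_le_one (hsup v hv.2.le)
    simpa using (hasSum_nat_add_iff' 1).mpr hs.hasSum
  · have h := succ_mul_coeff_succ_of_mk_eq_cubic (cubicCoeff_zero a b) (mk_cubicCoeff a b)
      (n := n) (by omega)
    rw [hb_def] at h
    field_simp at h ⊢
    linarith
end
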